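/- Define polynomials q_α ∈ ℚ[X] recursively by q_0(X) = 1 and q_{α+1}(X) = (2X+1)²·q_α(X) − 4X²·q_α(X−1). Then for all integers n ≥ 0 and α ≥ 0, the following binomial-sum identity holds: Σ_{l=0}^{n} C(2n+1, n−l)·(2l+1)^{2α+1} = q_α(n) · (2n+1) · C(2n, n), where C(m, j) denotes the binomial coefficient. -/

import Mathlib

open Polynomial

/-- The polynomials `q_α` defined by `q_0(X) = 1` and
`q_{α+1}(X) = (2X+1)²·q_α(X) − 4X²·q_α(X−1)`. -/
noncomputable def qPoly : ℕ → Polynomial ℚ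
  | 0 => 1
  | α + 1 => (2 * X + 1) ^ 2 * qPoly α - 4 * X ^ 2 * (qPoly α).comp (X - 1)

/-!
Write `S_α(n)` for the left-hand side. Since `(2n+1)² − (2l+1)² = 4(n−l)(n+l+1)` and
`C(2n+1, n−l)·(n−l)(n+l+1) = 2n(2n+1)·C(2n−1, n−1−l)`, multiplying each summand by `(2l+1)²` gives
`S_{α+1}(n) = (2n+1)²·S_α(n) − 8n(2n+1)·S_α(n−1)`. Because `n·C(2n,n) = 2(2n−1)·C(2n−2,n−1)`, this is
exactly the recursion defining `q_α`, transported to `q_α(n)(2n+1)C(2n,n)`. For `α = 0` the sum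
telescopes: `C(2n+1, n−l)(2l+1) = (2n+1)(C(2n, n+l) − C(2n, n+l+1))`.
-/

open Finset

noncomputable def binomOddPowerSum (α n : ℕ) : ℚ :=
  ∑ l ∈ range (n + 1), ((2 * n + 1).choose (n - l) : ℚ) * (2 * l + 1 : ℚ) ^ (2 * α + 1)

lemma Nat.choose_succ_succ_mul_mul_sub (N j : ℕ) :
    (N + 2).choose (j + 1) * (j + 1) * (N + 1 - j) = (N + 2) * (N + 1) * N.choose j := by
  rw [← Nat.add_one_mul_choose_eq, mul_assoc, ← Nat.choose_mul_succ_eq]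
  ring

lemma Nat.cast_choose_succ_mul_sub {R : Type*} [CommRing R] {N k : ℕ} (hk : k ≤ N) :
    ((N + 1).choose (k + 1) : R) * (2 * k + 1 - N)
      = (N + 1) * (N.choose k - N.choose (k + 1)) := by
  have lower := Nat.add_one_mul_choose_eq N k
  have upper := Nat.choose_mul_succ_eq N (k + 1)
  rw [show N + 1 - (k + 1) = N - k by omega] at upper
  have lower' := congrArg (Nat.cast : ℕ → R) lower
  have upper' := congrArg (Nat.cast : ℕ → R) upper
  push_cast [Nat.cast_sub hk] at lower' upper'
  linear_combination -lower' + upper'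

lemma binomOddPowerSum_zero_left (n : ℕ) :
    binomOddPowerSum 0 n = (2 * n + 1) * (2 * n).choose n := by
  have telescope (l : ℕ) (hmem : l ∈ range (n + 1)) :
      ((2 * n + 1).choose (n - l) : ℚ) * (2 * l + 1 : ℚ) ^ (2 * 0 + 1)
        = (2 * n + 1) * (((2 * n).choose (n + l) : ℚ) - (2 * n).choose (n + (l + 1))) := by
    have hl : l ≤ n := Nat.lt_succ_iff.mp (mem_range.mp hmem)
    rw [Nat.choose_symm_of_eq_add (show 2 * n + 1 = (n - l) + (n + l + 1) by omega)]
    have := Nat.cast_choose_succ_mul_sub (R := ℚ) (show n + l ≤ 2 * n by omega)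
    push_cast at this ⊢
    linear_combination this
  rw [binomOddPowerSum, sum_congr rfl telescope, ← mul_sum,
    sum_range_sub' (fun l => ((2 * n).choose (n + l) : ℚ)),
    Nat.choose_eq_zero_of_lt (show 2 * n < n + (n + 1) by omega)]
  simp

@[simp]
lemma binomOddPowerSum_zero_right (α : ℕ) : binomOddPowerSum α 0 = 1 := by
  simp [binomOddPowerSum]

lemma cast_choose_mul_sq_sub_sq {m l : ℕ} (hl : l ≤ m) :
    ((2 * m + 3).choose (m + 1 - l) : ℚ) * ((2 * m + 3) ^ 2 - (2 * l + 1) ^ 2)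
      = 8 * (m + 1) * (2 * m + 3) * (2 * m + 1).choose (m - l) := by
  have h := Nat.choose_succ_succ_mul_mul_sub (2 * m + 1) (m - l)
  rw [show m - l + 1 = m + 1 - l by omega, show 2 * m + 1 + 1 - (m - l) = m + l + 2 by omega] at h
  have h' := congrArg (Nat.cast : ℕ → ℚ) h
  push_cast [Nat.cast_sub (show l ≤ m + 1 by omega)] at h'
  linear_combination 4 * h'

lemma binomOddPowerSum_succ_succ (α m : ℕ) :
    binomOddPowerSum (α + 1) (m + 1)
      = (2 * m + 3) ^ 2 * binomOddPowerSum α (m + 1)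
        - 8 * (m + 1) * (2 * m + 3) * binomOddPowerSum α m := by
  have peel : ∑ l ∈ range (m + 2), ((2 * m + 3).choose (m + 1 - l) : ℚ)
        * ((2 * m + 3) ^ 2 - (2 * l + 1) ^ 2) * (2 * l + 1) ^ (2 * α + 1)
      = 8 * (m + 1) * (2 * m + 3) * binomOddPowerSum α m := by
    rw [sum_range_succ, binomOddPowerSum, mul_sum]
    push_cast
    rw [show (2 * m + 3 : ℚ) ^ 2 - (2 * (m + 1) + 1) ^ 2 = 0 by ring,
      mul_zero, zero_mul, add_zero]
    refine sum_congr rfl fun l hl => ?_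
    rw [cast_choose_mul_sq_sub_sq (Nat.lt_succ_iff.mp (mem_range.mp hl))]
    ring
  rw [← peel, binomOddPowerSum, binomOddPowerSum, mul_sum, ← sum_sub_distrib]
  refine sum_congr rfl fun l _ => ?_
  rw [show 2 * (m + 1) + 1 = 2 * m + 3 by ring]
  ring

lemma qPoly_eval_zero (α : ℕ) : (qPoly α).eval 0 = 1 := by
  induction α with
  | zero => simp [qPoly]
  | succ α ih => simp [qPoly, ih]

lemma qPoly_eval_succ (α : ℕ) (x : ℚ) :
    (qPoly (α + 1)).eval x
      = (2 * x + 1) ^ 2 * (qPoly α).eval x - 4 * x ^ 2 * (qPoly α).eval (x - 1) := by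
  simp [qPoly, eval_comp]

/-- The binomial-sum identity
`Σ_{l=0}^{n} C(2n+1, n−l)·(2l+1)^{2α+1} = q_α(n) · (2n+1) · C(2n, n)`. -/
theorem stmt_4 (n α : ℕ) :
    ∑ l ∈ Finset.range (n + 1), ((2 * n + 1).choose (n - l) : ℚ) * (2 * l + 1 : ℚ) ^ (2 * α + 1)
      = (qPoly α).eval (n : ℚ) * (2 * n + 1 : ℚ) * ((2 * n).choose n : ℚ) := by
  change binomOddPowerSum α n = _
  induction α generalizing n with
  | zero => simp [qPoly, binomOddPowerSum_zero_left]
  | succ α ih =>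
    cases n with
    | zero => simp [qPoly_eval_zero]
    | succ m =>
      have central : ((m : ℚ) + 1) * (2 * (m + 1)).choose (m + 1)
          = 2 * (2 * m + 1) * (2 * m).choose m := by
        exact_mod_cast Nat.succ_mul_centralBinom_succ m
      rw [binomOddPowerSum_succ_succ, ih, ih, qPoly_eval_succ]
      push_cast
      rw [add_sub_cancel_right]
      linear_combination (4 * (m + 1) * (2 * m + 3) * (qPoly α).eval (m : ℚ)) * central
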